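/- Define H′ₙ := Σ_{l=1}^{n} ad_H^{l-1}([H′, ad_H^{n-l}(O)]) for matrices H, H′, O (where ad_H(X) = [H, X]). Then H′ₙ = Σ_{l=0}^{n-1} C(n, l+1) · ad_H^{n-l-1}([ad_{-H}^{l}(H′) , O]), i.e., H′ₙ = Σ_{l=0}^{n-1} (n! / ((l+1)!(n-l-1)!)) · ad_H^{n-l-1}([[[H′, H], …, H] (l times), O]). -/

import Mathlib

open Matrix NormedSpace ComplexOrder

noncomputable def opNorm {n : ℕ} (A : Matrix (Fin n) (Fin n) ℂ) : ℝ :=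
  ‖(Matrix.toEuclideanCLM (𝕜 := ℂ) A : EuclideanSpace ℂ (Fin n) →L[ℂ] EuclideanSpace ℂ (Fin n))‖

noncomputable def traceNorm {n : ℕ} (A : Matrix (Fin n) (Fin n) ℂ) : ℝ :=
  ((Matrix.posSemidef_conjTranspose_mul_self A).1.eigenvectorUnitary.1 *
    diagonal (((↑) : ℝ → ℂ) ∘ Real.sqrt ∘ (Matrix.posSemidef_conjTranspose_mul_self A).1.eigenvalues) *
    (star (Matrix.posSemidef_conjTranspose_mul_self A).1.eigenvectorUnitary : Matrix (Fin n) (Fin n) ℂ)).trace.re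

def IsDensity {n : ℕ} (ρ : Matrix (Fin n) (Fin n) ℂ) : Prop := ρ.PosSemidef ∧ ρ.trace = 1

/-- Left adjoint action: ad_H(X) = [H, X]. -/
noncomputable def adL {n : ℕ} (H : Matrix (Fin n) (Fin n) ℂ) : Matrix (Fin n) (Fin n) ℂ → Matrix (Fin n) (Fin n) ℂ :=
  fun X => H * X - X * H

/-- Right-nesting action: X ↦ [X, H]. -/
noncomputable def adR {n : ℕ} (H : Matrix (Fin n) (Fin n) ℂ) : Matrix (Fin n) (Fin n) ℂ → Matrix (Fin n) (Fin n) ℂ :=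
  fun X => X * H - H * X

/-!
`ad h` is a derivation of the bracket, so `⁅x, ad h y⁆ = ad h ⁅x, y⁆ + ⁅-ad h x, y⁆`; iterating this
moves all powers of `ad h` off the second argument, with binomial coefficients:
`⁅x, (ad h)^m y⁆ = ∑ C(m, i) (ad h)^(m-i) ⁅(-ad h)^i x, y⁆`.
Both sides of the theorem satisfy `S (N + 1) = ad h (S N) + ⁅x, (ad h)^N y⁆`, by Pascal's rule on the
right-hand side, so they agree by induction on `N`.
-/

namespace LieAlgebra

open Finset

variable {R L : Type*} [CommRing R] [LieRing L] [LieAlgebra R L]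

theorem lie_ad_pow (h x y : L) (m : ℕ) :
    ⁅x, (ad R L h ^ m) y⁆ =
      ∑ i ∈ range (m + 1), m.choose i • (ad R L h ^ (m - i)) ⁅((-ad R L h) ^ i) x, y⁆ := by
  set A := ad R L h
  induction m generalizing y with
  | zero => simp
  | succ m ih =>
    have move_right (z w : L) : ⁅z, A w⁆ = A ⁅z, w⁆ + ⁅(-A) z, w⁆ := by
      simp [A]
    rw [sum_choose_succ_nsmul (fun i k ↦ (A ^ k) ⁅((-A) ^ i) x, y⁆), ← sum_add_distrib,
      pow_succ, Module.End.mul_apply, ih]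
    refine sum_congr rfl fun i hi ↦ ?_
    have exponent : m - i + 1 = m + 1 - i := by grind
    rw [move_right, map_add, nsmul_add, ← Module.End.mul_apply, ← pow_succ, exponent, pow_succ',
      Module.End.mul_apply (-A)]

theorem sum_ad_pow_lie_ad_pow (h x y : L) (N : ℕ) :
    ∑ l ∈ range N, (ad R L h ^ l) ⁅x, (ad R L h ^ (N - 1 - l)) y⁆ =
      ∑ l ∈ range N, N.choose (l + 1) • (ad R L h ^ (N - 1 - l)) ⁅((-ad R L h) ^ l) x, y⁆ := by
  set A := ad R L h
  induction N with
  | zero => simp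
  | succ N ih =>
    have lhs_succ : ∑ l ∈ range (N + 1), (A ^ l) ⁅x, (A ^ (N - l)) y⁆ =
        A (∑ l ∈ range N, (A ^ l) ⁅x, (A ^ (N - 1 - l)) y⁆) + ⁅x, (A ^ N) y⁆ := by
      rw [sum_range_succ', map_sum]
      refine congrArg₂ _ (sum_congr rfl fun l _ ↦ ?_) (by simp)
      rw [pow_succ', Module.End.mul_apply, Nat.sub_sub, Nat.add_comm 1 l]
    have rhs_shift : ∑ l ∈ range (N + 1), N.choose (l + 1) • (A ^ (N - l)) ⁅((-A) ^ l) x, y⁆ =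
        A (∑ l ∈ range N, N.choose (l + 1) • (A ^ (N - 1 - l)) ⁅((-A) ^ l) x, y⁆) := by
      rw [sum_range_succ, Nat.choose_succ_self, zero_smul, add_zero, map_sum]
      refine sum_congr rfl fun l hl ↦ ?_
      have exponent : N - l = N - 1 - l + 1 := by grind
      rw [map_nsmul, exponent, pow_succ', Module.End.mul_apply]
    simp only [Nat.add_sub_cancel, Nat.choose_succ_succ', add_smul, sum_add_distrib]
    rw [lhs_succ, rhs_shift, ih, lie_ad_pow, add_comm]

end LieAlgebra

/-- H′ₙ = Σ_{l=1}^{N} ad_H^{l-1}([H′, ad_H^{N-l}(O)])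
            = Σ_{l=0}^{N-1} C(N, l+1)·ad_H^{N-l-1}([[[H′,H],…,H] (l times), O]). -/
theorem stmt8 {n : ℕ} (H H' O : Matrix (Fin n) (Fin n) ℂ) (N : ℕ) :
    ∑ l ∈ Finset.range N,
        (adL H)^[l] (H' * ((adL H)^[N - 1 - l] O) - ((adL H)^[N - 1 - l] O) * H')
      = ∑ l ∈ Finset.range N, (N.choose (l + 1) : ℂ) •
          (adL H)^[N - 1 - l]
            (((adR H)^[l] H') * O - O * ((adR H)^[l] H')) := by
  let _ : LieRing (Matrix (Fin n) (Fin n) ℂ) := LieRing.ofAssociativeRing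
  let A := LieAlgebra.ad ℂ (Matrix (Fin n) (Fin n) ℂ) H
  have hL : adL H = A := rfl
  have hR : adR H = ⇑(-A) := by
    funext X
    simp [A, adR, Ring.lie_def]
  simp only [hL, hR, ← Module.End.coe_pow, ← Ring.lie_def, Nat.cast_smul_eq_nsmul]
  exact LieAlgebra.sum_ad_pow_lie_ad_pow H H' O N
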